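/- arXiv:2508.15775 — 4 statements merged into one kernel-verified Lean document; each statement's English description precedes it below -/
import Mathlib

section
/- Let T: V→g be a Φ-twisted Rota-Baxter operator on a 3-Leibniz algebra (g,[·,·,·]_g) with respect to a representation (V; ρ^l, ρ^m, ρ^r). Then the bracket [u,v,w]_T := ρ^l(Tu,Tv,w) + ρ^m(Tu,v,Tw) + ρ^r(u,Tv,Tw) + Φ(Tu,Tv,Tw) makes V into a 3-Leibniz algebra, and T is a morphism of 3-Leibniz algebras from (V,[·,·,·]_T) to g, i.e. T[u,v,w]_T = [Tu,Tv,Tw]_g. -/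
open Finset

variable {K : Type*} [Field K]

/-- The (left) Leibniz identity for a binary bracket. -/
def LeibnizRule {A : Type*} [Add A] (br : A → A → A) : Prop :=
  ∀ x y z, br x (br y z) = br (br x y) z + br y (br x z)

/-- The fundamental identity of a 3-Leibniz algebra. -/
def ThreeLeibnizRule {A : Type*} [Add A] (br : A → A → A → A) : Prop :=
  ∀ a b x y z, br a b (br x y z) = br (br a b x) y z + br x (br a b y) z + br x y (br a b z)

/-- Representation of a 3-Leibniz algebra: the five compatibility equations. -/
def IsRep3 {g V : Type*} [Add g] [Add V]
    (br : g → g → g → g) (ρl : g → g → V → V) (ρm : g → V → g → V) (ρr : V → g → g → V) : Prop :=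
  (∀ a b x y u, ρl a b (ρl x y u) = ρl (br a b x) y u + ρl x (br a b y) u + ρl x y (ρl a b u)) ∧
  (∀ a b x u z, ρl a b (ρm x u z) = ρm (br a b x) u z + ρm x (ρl a b u) z + ρm x u (br a b z)) ∧
  (∀ a b u y z, ρl a b (ρr u y z) = ρr (ρl a b u) y z + ρr u (br a b y) z + ρr u y (br a b z)) ∧
  (∀ a u x y z, ρm a u (br x y z) = ρr (ρm a u x) y z + ρm x (ρm a u y) z + ρl x y (ρm a u z)) ∧
  (∀ u b x y z, ρr u b (br x y z) = ρr (ρr u b x) y z + ρm x (ρr u b y) z + ρl x y (ρr u b z))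

/-- 2-cocycle condition for `Φ` in the 3-Leibniz cohomology. -/
def Is2Cocycle {g V : Type*} [Add g] [AddCommGroup V]
    (br : g → g → g → g) (ρl : g → g → V → V) (ρm : g → V → g → V) (ρr : V → g → g → V)
    (Φ : g → g → g → V) : Prop :=
  ∀ x1 y1 x2 y2 z,
    Φ x1 y1 (br x2 y2 z) - Φ x2 (br x1 y1 y2) z - Φ (br x1 y1 x2) y2 z - Φ x2 y2 (br x1 y1 z)
      + ρl x1 y1 (Φ x2 y2 z) - ρl x2 y2 (Φ x1 y1 z) - ρm x2 (Φ x1 y1 y2) z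
      - ρr (Φ x1 y1 x2) y2 z = 0

/-- `T` is a `Φ`-twisted Rota-Baxter operator. -/
def IsTRB {g V : Type*} [Add g] [Add V]
    (br : g → g → g → g) (ρl : g → g → V → V) (ρm : g → V → g → V) (ρr : V → g → g → V)
    (Φ : g → g → g → V) (T : V → g) : Prop :=
  ∀ u v w, br (T u) (T v) (T w)
    = T (ρl (T u) (T v) w + ρm (T u) v (T w) + ρr u (T v) (T w) + Φ (T u) (T v) (T w))

/-- NS-3-Leibniz algebra: four ternary operations `◁ = tl`, `▷ = tr`, `△ = tt`, `◇ = td`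
satisfying the six defining identities, where `⋆` is the sum of the four operations. -/
def IsNS3Leibniz {g : Type*} [Add g] (tl tr tt td : g → g → g → g) : Prop :=
  let ts : g → g → g → g := fun x y z => tl x y z + tr x y z + tt x y z + td x y z
  (∀ a b x y z, tr a b (tr x y z) = tr (ts a b x) y z + tr x (ts a b y) z + tr x y (tr a b z)) ∧
  (∀ a b x y z, tl a b (ts x y z) = tl (tl a b x) y z + tt x (tl a b y) z + tr x y (tl a b z)) ∧
  (∀ a b x y z, tt a b (ts x y z) = tl (tt a b x) y z + tt x (tt a b y) z + tr x y (tt a b z)) ∧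
  (∀ a b x y z, tr a b (tl x y z) = tl (tr a b x) y z + tl x (ts a b y) z + tl x y (ts a b z)) ∧
  (∀ a b x y z, tr a b (td x y z) = tt (ts a b x) y z + tt x (tr a b y) z + tt x y (ts a b z)) ∧
  (∀ a b x y z, td a b (ts x y z) + tr a b (td x y z)
    = tr x y (td a b z) + td x y (ts a b z) + tt x (td a b y) z + td x (ts a b y) z
      + td (ts a b x) y z + tl (td a b x) y z)

/-!
Expand `[a, b, [x, y, z]_T]_T` and replace `T [x, y, z]_T` by `[Tx, Ty, Tz]_g` using the twisted
Rota-Baxter identity. The five representation axioms then rewrite the terms in which a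
representation map is applied to another one, and the cocycle condition rewrites
`Φ (Ta, Tb, [Tx, Ty, Tz]_g)`; after these substitutions both sides of the fundamental identity
agree term by term.
-/

def twistedBracket {g V : Type*} [Add V] (ρl : g → g → V → V) (ρm : g → V → g → V)
    (ρr : V → g → g → V) (Φ : g → g → g → V) (T : V → g) (u v w : V) : V :=
  ρl (T u) (T v) w + ρm (T u) v (T w) + ρr u (T v) (T w) + Φ (T u) (T v) (T w)

theorem IsTRB.map_twistedBracket {g V : Type*} [Add g] [Add V] {br : g → g → g → g}
    {ρl : g → g → V → V} {ρm : g → V → g → V} {ρr : V → g → g → V} {Φ : g → g → g → V}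
    {T : V → g} (hT : IsTRB br ρl ρm ρr Φ T) (u v w : V) :
    T (twistedBracket ρl ρm ρr Φ T u v w) = br (T u) (T v) (T w) :=
  (hT u v w).symm

theorem Is2Cocycle.apply_bracket {g V : Type*} [Add g] [AddCommGroup V] {br : g → g → g → g}
    {ρl : g → g → V → V} {ρm : g → V → g → V} {ρr : V → g → g → V} {Φ : g → g → g → V}
    (hΦ : Is2Cocycle br ρl ρm ρr Φ) (a b x y z : g) :
    Φ a b (br x y z)
      = Φ x (br a b y) z + Φ (br a b x) y z + Φ x y (br a b z) - ρl a b (Φ x y z)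
        + ρl x y (Φ a b z) + ρm x (Φ a b y) z + ρr (Φ a b x) y z := by
  rw [← sub_eq_zero, ← hΦ a b x y z]
  abel

theorem threeLeibnizRule_twistedBracket {R g V : Type*} [CommSemiring R]
    [AddCommGroup g] [Module R g] [AddCommGroup V] [Module R V]
    {br : g →ₗ[R] g →ₗ[R] g →ₗ[R] g} {ρl : g →ₗ[R] g →ₗ[R] V →ₗ[R] V}
    {ρm : g →ₗ[R] V →ₗ[R] g →ₗ[R] V} {ρr : V →ₗ[R] g →ₗ[R] g →ₗ[R] V}
    {Φ : g →ₗ[R] g →ₗ[R] g →ₗ[R] V} {T : V →ₗ[R] g}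
    (hrep : IsRep3 (br · · ·) (ρl · · ·) (ρm · · ·) (ρr · · ·))
    (hΦ : Is2Cocycle (br · · ·) (ρl · · ·) (ρm · · ·) (ρr · · ·) (Φ · · ·))
    (hT : IsTRB (br · · ·) (ρl · · ·) (ρm · · ·) (ρr · · ·) (Φ · · ·) (T ·)) :
    ThreeLeibnizRule (twistedBracket (ρl · · ·) (ρm · · ·) (ρr · · ·) (Φ · · ·) (T ·)) := by
  obtain ⟨hll, hlm, hlr, hm, hr⟩ := hrep
  beta_reduce at hll hlm hlr hm hr
  intro a b x y z
  -- `↓` rewrites `T [x, y, z]_T` before simp unfolds and splits its argument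
  simp only [↓hT.map_twistedBracket, twistedBracket, map_add, LinearMap.add_apply]
  rw [hll (T a) (T b) (T x) (T y) z, hlm (T a) (T b) (T x) y (T z), hlr (T a) (T b) x (T y) (T z),
    hm (T a) b (T x) (T y) (T z), hr a (T b) (T x) (T y) (T z), hΦ.apply_bracket]
  abel

theorem stmt6_general {g : Type*} [AddCommGroup g] [Module K g] {V : Type*} [AddCommGroup V] [Module K V]
    (br : g →ₗ[K] g →ₗ[K] g →ₗ[K] g)
    (ρl : g →ₗ[K] g →ₗ[K] V →ₗ[K] V) (ρm : g →ₗ[K] V →ₗ[K] g →ₗ[K] V)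
    (ρr : V →ₗ[K] g →ₗ[K] g →ₗ[K] V)
    (hrep : IsRep3 (fun x y z : g => br x y z) (fun x y u => ρl x y u)
      (fun x u y => ρm x u y) (fun u x y => ρr u x y))
    (Φ : g →ₗ[K] g →ₗ[K] g →ₗ[K] V)
    (hΦ : Is2Cocycle (fun x y z : g => br x y z) (fun x y u => ρl x y u)
      (fun x u y => ρm x u y) (fun u x y => ρr u x y) (fun x y z => Φ x y z))
    (T : V →ₗ[K] g)
    (hT : IsTRB (fun x y z : g => br x y z) (fun x y u => ρl x y u)
      (fun x u y => ρm x u y) (fun u x y => ρr u x y) (fun x y z => Φ x y z)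
      (fun u => T u)) :
    ThreeLeibnizRule (fun u v w : V =>
        ρl (T u) (T v) w + ρm (T u) v (T w) + ρr u (T v) (T w) + Φ (T u) (T v) (T w)) ∧
    ∀ u v w : V,
      T (ρl (T u) (T v) w + ρm (T u) v (T w) + ρr u (T v) (T w) + Φ (T u) (T v) (T w))
        = br (T u) (T v) (T w) :=
  ⟨threeLeibnizRule_twistedBracket hrep hΦ hT, hT.map_twistedBracket⟩

theorem stmt6 {g : Type*} [AddCommGroup g] [Module K g] {V : Type*} [AddCommGroup V] [Module K V]
    (br : g →ₗ[K] g →ₗ[K] g →ₗ[K] g)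
    (h3 : ThreeLeibnizRule (fun x y z : g => br x y z))
    (ρl : g →ₗ[K] g →ₗ[K] V →ₗ[K] V) (ρm : g →ₗ[K] V →ₗ[K] g →ₗ[K] V)
    (ρr : V →ₗ[K] g →ₗ[K] g →ₗ[K] V)
    (hrep : IsRep3 (fun x y z : g => br x y z) (fun x y u => ρl x y u)
      (fun x u y => ρm x u y) (fun u x y => ρr u x y))
    (Φ : g →ₗ[K] g →ₗ[K] g →ₗ[K] V)
    (hΦ : Is2Cocycle (fun x y z : g => br x y z) (fun x y u => ρl x y u)
      (fun x u y => ρm x u y) (fun u x y => ρr u x y) (fun x y z => Φ x y z))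
    (T : V →ₗ[K] g)
    (hT : IsTRB (fun x y z : g => br x y z) (fun x y u => ρl x y u)
      (fun x u y => ρm x u y) (fun u x y => ρr u x y) (fun x y z => Φ x y z)
      (fun u => T u)) :
    ThreeLeibnizRule (fun u v w : V =>
        ρl (T u) (T v) w + ρm (T u) v (T w) + ρr u (T v) (T w) + Φ (T u) (T v) (T w)) ∧
    ∀ u v w : V,
      T (ρl (T u) (T v) w + ρm (T u) v (T w) + ρr u (T v) (T w) + Φ (T u) (T v) (T w))
        = br (T u) (T v) (T w) :=
  stmt6_general br ρl ρm ρr hrep Φ hΦ T hT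
end

section
/- Let T: V→g be a Φ-twisted Rota-Baxter operator and ϖ: g→V a linear map such that Id_V − ϖ∘T is invertible. Then T∘(Id_V − ϖ∘T)^{-1}: V→g is a (Φ+δϖ)-twisted Rota-Baxter operator. -/
open Finset

variable {K : Type*} [Field K]

/-! Put `P = id - ϖ ∘ T` and let `Y` be the `Φ`-twisted Rota-Baxter argument of `T` at
`P⁻¹ u, P⁻¹ v, P⁻¹ w`, so that `[T P⁻¹ u, T P⁻¹ v, T P⁻¹ w] = T Y`. The coboundary contributes
`-ϖ` of that bracket, i.e. `-ϖ (T Y)`, so the `(Φ + δϖ)`-twisted argument of `T ∘ P⁻¹` at `u, v, w`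
is `P Y`, and `T P⁻¹ (P Y) = T Y`. -/

section

variable {R g V : Type*} [CommRing R] [AddCommGroup g] [Module R g] [AddCommGroup V] [Module R V]
  (br : g →ₗ[R] g →ₗ[R] g →ₗ[R] g) (ρl : g →ₗ[R] g →ₗ[R] V →ₗ[R] V)
  (ρm : g →ₗ[R] V →ₗ[R] g →ₗ[R] V) (ρr : V →ₗ[R] g →ₗ[R] g →ₗ[R] V)

def coboundary (ϖ : g →ₗ[R] V) (x y z : g) : V :=
  -ϖ (br x y z) + ρl x y (ϖ z) + ρm x (ϖ y) z + ρr (ϖ x) y z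

theorem rotaBaxterSum_sub_add_coboundary (Φ : g →ₗ[R] g →ₗ[R] g →ₗ[R] V) (T : V →ₗ[R] g)
    (ϖ : g →ₗ[R] V) (u v w : V) :
    ρl (T u) (T v) (w - ϖ (T w)) + ρm (T u) (v - ϖ (T v)) (T w) + ρr (u - ϖ (T u)) (T v) (T w)
        + (Φ (T u) (T v) (T w) + coboundary br ρl ρm ρr ϖ (T u) (T v) (T w))
      = ρl (T u) (T v) w + ρm (T u) v (T w) + ρr u (T v) (T w) + Φ (T u) (T v) (T w)
        - ϖ (br (T u) (T v) (T w)) := by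
  simp only [coboundary, map_sub, LinearMap.sub_apply]
  abel

end

theorem stmt8_general {g : Type*} [AddCommGroup g] [Module K g] {V : Type*} [AddCommGroup V] [Module K V]
    (br : g →ₗ[K] g →ₗ[K] g →ₗ[K] g)
    (ρl : g →ₗ[K] g →ₗ[K] V →ₗ[K] V) (ρm : g →ₗ[K] V →ₗ[K] g →ₗ[K] V)
    (ρr : V →ₗ[K] g →ₗ[K] g →ₗ[K] V)
    (Φ : g →ₗ[K] g →ₗ[K] g →ₗ[K] V)
    (T : V →ₗ[K] g)
    (hT : IsTRB (fun x y z : g => br x y z) (fun x y u => ρl x y u)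
      (fun x u y => ρm x u y) (fun u x y => ρr u x y) (fun x y z => Φ x y z)
      (fun u => T u))
    (ϖ : g →ₗ[K] V) (S : V →ₗ[K] V)
    (hS1 : (LinearMap.id - ϖ ∘ₗ T) ∘ₗ S = LinearMap.id)
    (hS2 : S ∘ₗ (LinearMap.id - ϖ ∘ₗ T) = LinearMap.id) :
    IsTRB (fun x y z : g => br x y z) (fun x y u => ρl x y u)
      (fun x u y => ρm x u y) (fun u x y => ρr u x y)
      (fun x y z => Φ x y z
        + (-ϖ (br x y z) + ρl x y (ϖ z) + ρm x (ϖ y) z + ρr (ϖ x) y z))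
      (fun u => T (S u)) := by
  have hSinv : ∀ x, S x - ϖ (T (S x)) = x := fun x => by simpa using LinearMap.congr_fun hS1 x
  have hinvS : ∀ x, S (x - ϖ (T x)) = x := fun x => by simpa using LinearMap.congr_fun hS2 x
  intro u v w
  have hTS := hT (S u) (S v) (S w)
  have hsum := rotaBaxterSum_sub_add_coboundary br ρl ρm ρr Φ T ϖ (S u) (S v) (S w)
  simp only [hSinv] at hsum
  beta_reduce at hTS ⊢
  change _ = T (S (_ + (Φ _ _ _ + coboundary br ρl ρm ρr ϖ _ _ _)))
  rw [hsum, hTS, hinvS]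

theorem stmt8 {g : Type*} [AddCommGroup g] [Module K g] {V : Type*} [AddCommGroup V] [Module K V]
    (br : g →ₗ[K] g →ₗ[K] g →ₗ[K] g)
    (h3 : ThreeLeibnizRule (fun x y z : g => br x y z))
    (ρl : g →ₗ[K] g →ₗ[K] V →ₗ[K] V) (ρm : g →ₗ[K] V →ₗ[K] g →ₗ[K] V)
    (ρr : V →ₗ[K] g →ₗ[K] g →ₗ[K] V)
    (hrep : IsRep3 (fun x y z : g => br x y z) (fun x y u => ρl x y u)
      (fun x u y => ρm x u y) (fun u x y => ρr u x y))
    (Φ : g →ₗ[K] g →ₗ[K] g →ₗ[K] V)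
    (hΦ : Is2Cocycle (fun x y z : g => br x y z) (fun x y u => ρl x y u)
      (fun x u y => ρm x u y) (fun u x y => ρr u x y) (fun x y z => Φ x y z))
    (T : V →ₗ[K] g)
    (hT : IsTRB (fun x y z : g => br x y z) (fun x y u => ρl x y u)
      (fun x u y => ρm x u y) (fun u x y => ρr u x y) (fun x y z => Φ x y z)
      (fun u => T u))
    (ϖ : g →ₗ[K] V) (S : V →ₗ[K] V)
    (hS1 : (LinearMap.id - ϖ ∘ₗ T) ∘ₗ S = LinearMap.id)
    (hS2 : S ∘ₗ (LinearMap.id - ϖ ∘ₗ T) = LinearMap.id) :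
    IsTRB (fun x y z : g => br x y z) (fun x y u => ρl x y u)
      (fun x u y => ρm x u y) (fun u x y => ρr u x y)
      (fun x y z => Φ x y z
        + (-ϖ (br x y z) + ρl x y (ϖ z) + ρm x (ϖ y) z + ρr (ϖ x) y z))
      (fun u => T (S u)) :=
  stmt8_general br ρl ρm ρr Φ T hT ϖ S hS1 hS2
end

section
/- Let T: V→g be a Φ-twisted Rota-Baxter operator and ϖ: g→V a 1-cocycle (δϖ = 0) such that Id_V + ϖ∘T is invertible. Then T_ϖ := T∘(Id_V + ϖ∘T)^{-1}: V→g is again a Φ-twisted Rota-Baxter operator. -/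
/-!
Put `N = Id_V + ϖ ∘ T`, so that `T_ϖ ∘ N = T`. Applying the cocycle identity of `ϖ` to
`[Tu, Tv, Tw] = T X`, where `X` is the twisted Rota-Baxter argument of `T` at `(u, v, w)`,
shows that the twisted Rota-Baxter argument of `T_ϖ` at `(Nu, Nv, Nw)` is `N X`. Hence
`[T_ϖ(Nu), T_ϖ(Nv), T_ϖ(Nw)] = T X = T_ϖ(N X)`, and `N` is onto.
-/

open Finset

variable {K : Type*} [Field K]

def twistedRBArg {R g V : Type*} [CommSemiring R] [AddCommMonoid g] [Module R g]
    [AddCommMonoid V] [Module R V]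
    (ρl : g →ₗ[R] g →ₗ[R] V →ₗ[R] V) (ρm : g →ₗ[R] V →ₗ[R] g →ₗ[R] V)
    (ρr : V →ₗ[R] g →ₗ[R] g →ₗ[R] V) (Φ : g →ₗ[R] g →ₗ[R] g →ₗ[R] V) (T : V → g)
    (u v w : V) : V :=
  ρl (T u) (T v) w + ρm (T u) v (T w) + ρr u (T v) (T w) + Φ (T u) (T v) (T w)

section Deformation

variable {R g V : Type*} [CommSemiring R] [AddCommMonoid g] [Module R g]
  [AddCommMonoid V] [Module R V]
  {br : g →ₗ[R] g →ₗ[R] g →ₗ[R] g}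
  {ρl : g →ₗ[R] g →ₗ[R] V →ₗ[R] V} {ρm : g →ₗ[R] V →ₗ[R] g →ₗ[R] V}
  {ρr : V →ₗ[R] g →ₗ[R] g →ₗ[R] V} {Φ : g →ₗ[R] g →ₗ[R] g →ₗ[R] V}
  {T T' : V → g} {ϖ : g →ₗ[R] V}

theorem twistedRBArg_deform
    (hT : IsTRB (fun x y z => br x y z) (fun x y u => ρl x y u) (fun x u y => ρm x u y)
      (fun u x y => ρr u x y) (fun x y z => Φ x y z) T)
    (hcoc : ∀ x y z : g, ϖ (br x y z) = ρl x y (ϖ z) + ρm x (ϖ y) z + ρr (ϖ x) y z)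
    (hT' : ∀ u, T' (u + ϖ (T u)) = T u) (u v w : V) :
    twistedRBArg ρl ρm ρr Φ T' (u + ϖ (T u)) (v + ϖ (T v)) (w + ϖ (T w))
      = twistedRBArg ρl ρm ρr Φ T u v w + ϖ (T (twistedRBArg ρl ρm ρr Φ T u v w)) := by
  have hcocT : ϖ (T (twistedRBArg ρl ρm ρr Φ T u v w))
      = ρl (T u) (T v) (ϖ (T w)) + ρm (T u) (ϖ (T v)) (T w) + ρr (ϖ (T u)) (T v) (T w) := by
    rw [twistedRBArg, ← hT, hcoc]
  rw [hcocT]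
  simp only [twistedRBArg, hT', map_add, LinearMap.add_apply]
  abel

theorem IsTRB.of_comp_deform
    (hT : IsTRB (fun x y z => br x y z) (fun x y u => ρl x y u) (fun x u y => ρm x u y)
      (fun u x y => ρr u x y) (fun x y z => Φ x y z) T)
    (hcoc : ∀ x y z : g, ϖ (br x y z) = ρl x y (ϖ z) + ρm x (ϖ y) z + ρr (ϖ x) y z)
    (hT' : ∀ u, T' (u + ϖ (T u)) = T u)
    (hsurj : Function.Surjective fun u => u + ϖ (T u)) :
    IsTRB (fun x y z => br x y z) (fun x y u => ρl x y u) (fun x u y => ρm x u y)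
      (fun u x y => ρr u x y) (fun x y z => Φ x y z) T' := by
  intro u v w
  obtain ⟨u, rfl⟩ := hsurj u
  obtain ⟨v, rfl⟩ := hsurj v
  obtain ⟨w, rfl⟩ := hsurj w
  change br (T' _) (T' _) (T' _) = T' (twistedRBArg ρl ρm ρr Φ T' _ _ _)
  rw [twistedRBArg_deform hT hcoc hT']
  simp only [hT']
  exact hT u v w

end Deformation

theorem stmt9_general {g : Type*} [AddCommGroup g] [Module K g] {V : Type*} [AddCommGroup V] [Module K V]
    (br : g →ₗ[K] g →ₗ[K] g →ₗ[K] g)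
    (ρl : g →ₗ[K] g →ₗ[K] V →ₗ[K] V) (ρm : g →ₗ[K] V →ₗ[K] g →ₗ[K] V)
    (ρr : V →ₗ[K] g →ₗ[K] g →ₗ[K] V)
    (Φ : g →ₗ[K] g →ₗ[K] g →ₗ[K] V)
    (T : V →ₗ[K] g)
    (hT : IsTRB (fun x y z : g => br x y z) (fun x y u => ρl x y u)
      (fun x u y => ρm x u y) (fun u x y => ρr u x y) (fun x y z => Φ x y z)
      (fun u => T u))
    (ϖ : g →ₗ[K] V)
    (hcoc : ∀ x y z : g, ϖ (br x y z) = ρl x y (ϖ z) + ρm x (ϖ y) z + ρr (ϖ x) y z)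
    (S : V →ₗ[K] V)
    (hS1 : (LinearMap.id + ϖ ∘ₗ T) ∘ₗ S = LinearMap.id)
    (hS2 : S ∘ₗ (LinearMap.id + ϖ ∘ₗ T) = LinearMap.id) :
    IsTRB (fun x y z : g => br x y z) (fun x y u => ρl x y u)
      (fun x u y => ρm x u y) (fun u x y => ρr u x y) (fun x y z => Φ x y z)
      (fun u => T (S u)) := by
  refine IsTRB.of_comp_deform hT hcoc (fun u => ?_) (fun u => ⟨S u, ?_⟩)
  · simpa using congrArg T (LinearMap.congr_fun hS2 u)
  · simpa using LinearMap.congr_fun hS1 u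

theorem stmt9 {g : Type*} [AddCommGroup g] [Module K g] {V : Type*} [AddCommGroup V] [Module K V]
    (br : g →ₗ[K] g →ₗ[K] g →ₗ[K] g)
    (h3 : ThreeLeibnizRule (fun x y z : g => br x y z))
    (ρl : g →ₗ[K] g →ₗ[K] V →ₗ[K] V) (ρm : g →ₗ[K] V →ₗ[K] g →ₗ[K] V)
    (ρr : V →ₗ[K] g →ₗ[K] g →ₗ[K] V)
    (hrep : IsRep3 (fun x y z : g => br x y z) (fun x y u => ρl x y u)
      (fun x u y => ρm x u y) (fun u x y => ρr u x y))
    (Φ : g →ₗ[K] g →ₗ[K] g →ₗ[K] V)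
    (hΦ : Is2Cocycle (fun x y z : g => br x y z) (fun x y u => ρl x y u)
      (fun x u y => ρm x u y) (fun u x y => ρr u x y) (fun x y z => Φ x y z))
    (T : V →ₗ[K] g)
    (hT : IsTRB (fun x y z : g => br x y z) (fun x y u => ρl x y u)
      (fun x u y => ρm x u y) (fun u x y => ρr u x y) (fun x y z => Φ x y z)
      (fun u => T u))
    (ϖ : g →ₗ[K] V)
    (hcoc : ∀ x y z : g, ϖ (br x y z) = ρl x y (ϖ z) + ρm x (ϖ y) z + ρr (ϖ x) y z)
    (S : V →ₗ[K] V)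
    (hS1 : (LinearMap.id + ϖ ∘ₗ T) ∘ₗ S = LinearMap.id)
    (hS2 : S ∘ₗ (LinearMap.id + ϖ ∘ₗ T) = LinearMap.id) :
    IsTRB (fun x y z : g => br x y z) (fun x y u => ρl x y u)
      (fun x u y => ρm x u y) (fun u x y => ρr u x y) (fun x y z => Φ x y z)
      (fun u => T (S u)) :=
  stmt9_general br ρl ρm ρr Φ T hT ϖ hcoc S hS1 hS2
end

section
/- Let T: V→g be a Φ-twisted Rota-Baxter operator on a 3-Leibniz algebra (g,[·,·,·]_g) with representation (V; ρ^l, ρ^m, ρ^r). Define ρ_T^l(u,v,x) := [Tu,Tv,x]_g − T(ρ^m(Tu,v,x) + ρ^r(u,Tv,x) + Φ(Tu,Tv,x)), ρ_T^m(u,x,v) := [Tu,x,Tv]_g − T(ρ^l(Tu,x,v) + ρ^r(u,x,Tv) + Φ(Tu,x,Tv)), and ρ_T^r(x,u,v) := [x,Tu,Tv]_g − T(ρ^l(x,Tu,v) + ρ^m(x,u,Tv) + Φ(x,Tu,Tv)). Then (g; ρ_T^l, ρ_T^m, ρ_T^r) is a representation of the 3-Leibniz algebra (V, [·,·,·]_T).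 -/
open Finset

variable {K : Type*} [Field K]

/-!
The bracket of the twisted semidirect product `g ⋉_Φ V` satisfies the fundamental identity
because `ρ` is a representation and `Φ` a 2-cocycle, and the twisted Rota-Baxter identity says
that the graph `{(Tu, u)}` is a subalgebra on which the bracket is `[·,·,·]_T`. Brackets with two
entries in a subalgebra `A` of a 3-Leibniz algebra `L` descend to `L / A` and make it a
representation of `A`. The map `(x, w) ↦ x - T w` identifies `(g ⋉_Φ V) / graph T` with `g`, and
the descended brackets are `ρ_T^l`, `ρ_T^m`, `ρ_T^r`.
-/

section QuotientRepresentation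

variable {R L A M : Type*} [CommSemiring R] [AddCommMonoid L] [Module R L]
  [AddCommMonoid A] [Module R A] [AddCommMonoid M] [Module R M]
  {B : L →ₗ[R] L →ₗ[R] L →ₗ[R] L} {bA : A → A → A → A} {ι : A →ₗ[R] L} {π : L →ₗ[R] M}
  {j : M →ₗ[R] L}

/- `M` plays the role of `L ⧸ range ι`: `π` is the quotient map and `j` a linear section of it. -/
variable (hι : ∀ a b c, B (ι a) (ι b) (ι c) = ι (bA a b c)) (hπι : ∀ a, π (ι a) = 0)
  (hsplit : ∀ X, ∃ c, ι c + j (π X) = X)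
include hι hπι hsplit

theorem proj_bracket_proj_left (a b : A) (X : L) :
    π (B (j (π X)) (ι a) (ι b)) = π (B X (ι a) (ι b)) := by
  obtain ⟨c, hc⟩ := hsplit X
  conv_rhs => rw [← hc]
  simp [hι, hπι]

theorem proj_bracket_proj_mid (a b : A) (X : L) :
    π (B (ι a) (j (π X)) (ι b)) = π (B (ι a) X (ι b)) := by
  obtain ⟨c, hc⟩ := hsplit X
  conv_rhs => rw [← hc]
  simp [hι, hπι]

theorem proj_bracket_proj_right (a b : A) (X : L) :
    π (B (ι a) (ι b) (j (π X))) = π (B (ι a) (ι b) X) := by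
  obtain ⟨c, hc⟩ := hsplit X
  conv_rhs => rw [← hc]
  simp [hι, hπι]

/-- Once the inner `j ∘ π` are removed, each representation identity is `π` applied to an
instance of the fundamental identity of `L`. -/
theorem isRep3_of_splitting (hB : ThreeLeibnizRule fun X Y Z => B X Y Z) :
    IsRep3 bA (fun a b m => π (B (ι a) (ι b) (j m))) (fun a m b => π (B (ι a) (j m) (ι b)))
      (fun m a b => π (B (j m) (ι a) (ι b))) := by
  simp only [IsRep3, proj_bracket_proj_left hι hπι hsplit, proj_bracket_proj_mid hι hπι hsplit,
    proj_bracket_proj_right hι hπι hsplit, ← hι]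
  refine ⟨?_, ?_, ?_, ?_, ?_⟩ <;>
  · intros
    rw [← map_add, ← map_add]
    exact congrArg π (hB ..)

end QuotientRepresentation

section TwistedSemidirectProduct

variable {R g V : Type*} [CommSemiring R] [AddCommMonoid g] [Module R g] [AddCommMonoid V]
  [Module R V] (br : g →ₗ[R] g →ₗ[R] g →ₗ[R] g) (ρl : g →ₗ[R] g →ₗ[R] V →ₗ[R] V)
  (ρm : g →ₗ[R] V →ₗ[R] g →ₗ[R] V) (ρr : V →ₗ[R] g →ₗ[R] g →ₗ[R] V)
  (Φ : g →ₗ[R] g →ₗ[R] g →ₗ[R] V)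

def twistedSemidirectBracket : g × V →ₗ[R] g × V →ₗ[R] g × V →ₗ[R] g × V :=
  LinearMap.mk₂ R
    (fun X Y => ((br X.1 Y.1).comp (LinearMap.fst R g V)).prod
      ((ρl X.1 Y.1).comp (LinearMap.snd R g V) +
        (ρm X.1 Y.2 + ρr X.2 Y.1 + Φ X.1 Y.1).comp (LinearMap.fst R g V)))
    (by intros; ext <;> simp; abel) (by intros; ext <;> simp)
    (by intros; ext <;> simp; abel) (by intros; ext <;> simp)

@[simp]
theorem twistedSemidirectBracket_apply (X Y Z : g × V) :
    twistedSemidirectBracket br ρl ρm ρr Φ X Y Z =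
      (br X.1 Y.1 Z.1, ρl X.1 Y.1 Z.2 + ρm X.1 Y.2 Z.1 + ρr X.2 Y.1 Z.1 + Φ X.1 Y.1 Z.1) := by
  simp [twistedSemidirectBracket, add_assoc]

variable {br ρl ρm ρr Φ} in
theorem twistedSemidirectBracket_graph {T : V →ₗ[R] g}
    (hT : IsTRB (fun x y z => br x y z) (fun x y u => ρl x y u) (fun x u y => ρm x u y)
      (fun u x y => ρr u x y) (fun x y z => Φ x y z) (fun u => T u)) (u v w : V) :
    twistedSemidirectBracket br ρl ρm ρr Φ (T.prod .id u) (T.prod .id v) (T.prod .id w) =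
      T.prod .id (ρl (T u) (T v) w + ρm (T u) v (T w) + ρr u (T v) (T w) + Φ (T u) (T v) (T w)) :=
  Prod.ext (hT u v w) (by simp)

end TwistedSemidirectProduct

theorem threeLeibnizRule_twistedSemidirectBracket {R g V : Type*} [CommSemiring R]
    [AddCommMonoid g] [Module R g] [AddCommGroup V] [Module R V]
    {br : g →ₗ[R] g →ₗ[R] g →ₗ[R] g} {ρl : g →ₗ[R] g →ₗ[R] V →ₗ[R] V}
    {ρm : g →ₗ[R] V →ₗ[R] g →ₗ[R] V} {ρr : V →ₗ[R] g →ₗ[R] g →ₗ[R] V}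
    {Φ : g →ₗ[R] g →ₗ[R] g →ₗ[R] V} (h3 : ThreeLeibnizRule fun x y z => br x y z)
    (hrep : IsRep3 (fun x y z => br x y z) (fun x y u => ρl x y u) (fun x u y => ρm x u y)
      (fun u x y => ρr u x y))
    (hΦ : Is2Cocycle (fun x y z => br x y z) (fun x y u => ρl x y u) (fun x u y => ρm x u y)
      (fun u x y => ρr u x y) (fun x y z => Φ x y z)) :
    ThreeLeibnizRule fun X Y Z => twistedSemidirectBracket br ρl ρm ρr Φ X Y Z := by
  obtain ⟨r1, r2, r3, r4, r5⟩ := hrep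
  beta_reduce at r1 r2 r3 r4 r5 hΦ
  rintro ⟨a, u⟩ ⟨b, v⟩ ⟨x, w₁⟩ ⟨y, w₂⟩ ⟨z, w₃⟩
  simp only [twistedSemidirectBracket_apply, map_add, LinearMap.add_apply, Prod.mk_add_mk,
    Prod.mk.injEq]
  refine ⟨h3 a b x y z, ?_⟩
  -- the terms with a `V`-entry are the five representation identities, the others the cocycle
  rw [r1 a b x y w₃, r2 a b x w₂ z, r3 a b w₁ y z, r4 a v x y z, r5 u b x y z, ← sub_eq_zero,
    ← hΦ a b x y z]
  abel
theorem stmt13 {g : Type*} [AddCommGroup g] [Module K g] {V : Type*} [AddCommGroup V] [Module K V]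
    (br : g →ₗ[K] g →ₗ[K] g →ₗ[K] g)
    (h3 : ThreeLeibnizRule (fun x y z : g => br x y z))
    (ρl : g →ₗ[K] g →ₗ[K] V →ₗ[K] V) (ρm : g →ₗ[K] V →ₗ[K] g →ₗ[K] V)
    (ρr : V →ₗ[K] g →ₗ[K] g →ₗ[K] V)
    (hrep : IsRep3 (fun x y z : g => br x y z) (fun x y u => ρl x y u)
      (fun x u y => ρm x u y) (fun u x y => ρr u x y))
    (Φ : g →ₗ[K] g →ₗ[K] g →ₗ[K] V)
    (hΦ : Is2Cocycle (fun x y z : g => br x y z) (fun x y u => ρl x y u)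
      (fun x u y => ρm x u y) (fun u x y => ρr u x y) (fun x y z => Φ x y z))
    (T : V →ₗ[K] g)
    (hT : IsTRB (fun x y z : g => br x y z) (fun x y u => ρl x y u)
      (fun x u y => ρm x u y) (fun u x y => ρr u x y) (fun x y z => Φ x y z)
      (fun u => T u)) :
    IsRep3
      (fun u v w : V =>
        ρl (T u) (T v) w + ρm (T u) v (T w) + ρr u (T v) (T w) + Φ (T u) (T v) (T w))
      (fun u v x => br (T u) (T v) x - T (ρm (T u) v x + ρr u (T v) x + Φ (T u) (T v) x))
      (fun u x v => br (T u) x (T v) - T (ρl (T u) x v + ρr u x (T v) + Φ (T u) x (T v)))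
      (fun x u v => br x (T u) (T v) - T (ρl x (T u) v + ρm x u (T v) + Φ x (T u) (T v))) := by
  have hquot := isRep3_of_splitting (ι := T.prod LinearMap.id)
    (π := LinearMap.fst K g V - T ∘ₗ LinearMap.snd K g V) (j := LinearMap.inl K g V)
    (twistedSemidirectBracket_graph hT)
    (fun u => sub_self (T u)) (fun X => ⟨X.2, by ext <;> simp⟩)
    (threeLeibnizRule_twistedSemidirectBracket h3 hrep hΦ)
  simpa using hquot
end
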